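/- Let U, V, M, Y : ℝ³ → ℝ be smooth, D_η = e^U(∂_η + Y∂_θ), φ = D_η M − e^U Y_θ, ψ = D_η(U+V). Define A = D_η φ + D_η ψ − ½φ² − φψ − ψ², B = −D_η φ + ½φ², C = −D_η ψ − ½φ² + ψ². Assume (φ+ψ)_θ = ψ(U+V)_θ. Then the combination D := A_θ − (U+V)_θ A − V_θ B + U_θ C is identically zero. -/

import Mathlib

noncomputable section

/-- ∂θ : partial derivative in the first (fast phase) variable θ. -/
def pθ (f : ℝ × ℝ × ℝ → ℝ) (x : ℝ × ℝ × ℝ) : ℝ := fderiv ℝ f x (1, 0, 0)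

/-- ∂η : partial derivative in the second (intermediate transverse) variable η. -/
def pη (f : ℝ × ℝ × ℝ → ℝ) (x : ℝ × ℝ × ℝ) : ℝ := fderiv ℝ f x (0, 1, 0)

/-- ∂v : partial derivative in the third (slow ray) variable v. -/
def pv (f : ℝ × ℝ × ℝ → ℝ) (x : ℝ × ℝ × ℝ) : ℝ := fderiv ℝ f x (0, 0, 1)

/-- The transverse derivative Dη f = e^U (∂η f + Y ∂θ f). -/
def Dder (U Y f : ℝ × ℝ × ℝ → ℝ) (x : ℝ × ℝ × ℝ) : ℝ :=
  Real.exp (U x) * (pη f x + Y x * pθ f x)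

/-- φ = Dη M − e^U Y_θ. -/
def phiF (U M Y : ℝ × ℝ × ℝ → ℝ) (x : ℝ × ℝ × ℝ) : ℝ :=
  Dder U Y M x - Real.exp (U x) * pθ Y x

/-- ψ = Dη (U + V). -/
def psiF (U V Y : ℝ × ℝ × ℝ → ℝ) (x : ℝ × ℝ × ℝ) : ℝ :=
  Dder U Y (fun p => U p + V p) x

section Aux

variable {f g U V Y : ℝ × ℝ × ℝ → ℝ} {x : ℝ × ℝ × ℝ} {u w : ℝ × ℝ × ℝ}

lemma pd_smooth (hf : ContDiff ℝ (⊤ : ℕ∞) f) (u : ℝ × ℝ × ℝ) :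
    ContDiff ℝ (⊤ : ℕ∞) (fun x => fderiv ℝ f x u) :=
  (hf.fderiv_right (by simp)).clm_apply contDiff_const

lemma pθ_smooth (hf : ContDiff ℝ (⊤ : ℕ∞) f) : ContDiff ℝ (⊤ : ℕ∞) (pθ f) := pd_smooth hf _

lemma pd_add (hf : DifferentiableAt ℝ f x) (hg : DifferentiableAt ℝ g x) :
    fderiv ℝ (fun p => f p + g p) x u = fderiv ℝ f x u + fderiv ℝ g x u := by
  rw [fderiv_fun_add hf hg]; rfl

lemma pd_sub (hf : DifferentiableAt ℝ f x) (hg : DifferentiableAt ℝ g x) :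
    fderiv ℝ (fun p => f p - g p) x u = fderiv ℝ f x u - fderiv ℝ g x u := by
  rw [fderiv_fun_sub hf hg]; rfl

lemma pd_mul (hf : DifferentiableAt ℝ f x) (hg : DifferentiableAt ℝ g x) :
    fderiv ℝ (fun p => f p * g p) x u
      = f x * fderiv ℝ g x u + g x * fderiv ℝ f x u := by
  rw [fderiv_fun_mul hf hg]; simp [smul_eq_mul]

lemma pd_exp (hf : DifferentiableAt ℝ f x) :
    fderiv ℝ (fun p => Real.exp (f p)) x u = Real.exp (f x) * fderiv ℝ f x u := by
  rw [fderiv_exp hf]; simp [smul_eq_mul]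

lemma pd_sq (hf : DifferentiableAt ℝ f x) :
    fderiv ℝ (fun p => (f p)^2) x u = 2 * f x * fderiv ℝ f x u := by
  simp only [pow_two]; rw [pd_mul hf hf]; ring

lemma pd_const_mul (hf : DifferentiableAt ℝ f x) (c : ℝ) :
    fderiv ℝ (fun p => c * f p) x u = c * fderiv ℝ f x u := by
  rw [fderiv_const_mul hf]; simp

lemma pd_comm (hf : ContDiff ℝ (⊤ : ℕ∞) f) (x u w : ℝ × ℝ × ℝ) :
    fderiv ℝ (fun y => fderiv ℝ f y w) x u = fderiv ℝ (fun y => fderiv ℝ f y u) x w := by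
  have h1 : DifferentiableAt ℝ (fderiv ℝ f) x :=
    ((hf.fderiv_right (m := (⊤ : ℕ∞)) (by simp)).differentiable (by simp)) x
  have hsymm := ((hf.contDiffAt (x := x)).isSymmSndFDerivAt (by simp; exact WithTop.coe_le_coe.2 (le_top : (2 : ℕ∞) ≤ ⊤))).eq u w
  rw [fderiv_clm_apply h1 (differentiableAt_const _),
      fderiv_clm_apply h1 (differentiableAt_const _)]
  simpa using hsymm

lemma pθ_add (hf : DifferentiableAt ℝ f x) (hg : DifferentiableAt ℝ g x) :
    pθ (fun p => f p + g p) x = pθ f x + pθ g x := pd_add hf hg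

lemma pθ_sub (hf : DifferentiableAt ℝ f x) (hg : DifferentiableAt ℝ g x) :
    pθ (fun p => f p - g p) x = pθ f x - pθ g x := pd_sub hf hg

lemma pθ_mul (hf : DifferentiableAt ℝ f x) (hg : DifferentiableAt ℝ g x) :
    pθ (fun p => f p * g p) x = f x * pθ g x + g x * pθ f x := pd_mul hf hg

lemma pθ_sq (hf : DifferentiableAt ℝ f x) :
    pθ (fun p => (f p)^2) x = 2 * f x * pθ f x := pd_sq hf

lemma pθ_const_mul (hf : DifferentiableAt ℝ f x) (c : ℝ) :
    pθ (fun p => c * f p) x = c * pθ f x := pd_const_mul hf c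

lemma Dder_smooth (hU : ContDiff ℝ (⊤ : ℕ∞) U) (hY : ContDiff ℝ (⊤ : ℕ∞) Y) (hf : ContDiff ℝ (⊤ : ℕ∞) f) :
    ContDiff ℝ (⊤ : ℕ∞) (Dder U Y f) :=
  hU.exp.mul ((pd_smooth hf _).add (hY.mul (pd_smooth hf _)))

lemma Dder_add (hf : DifferentiableAt ℝ f x) (hg : DifferentiableAt ℝ g x) :
    Dder U Y (fun p => f p + g p) x = Dder U Y f x + Dder U Y g x := by
  unfold Dder pθ pη
  rw [pd_add hf hg, pd_add hf hg]; ring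

lemma Dder_mul (hf : DifferentiableAt ℝ f x) (hg : DifferentiableAt ℝ g x) :
    Dder U Y (fun p => f p * g p) x = f x * Dder U Y g x + g x * Dder U Y f x := by
  unfold Dder pθ pη
  rw [pd_mul hf hg, pd_mul hf hg]; ring

lemma Dder_congr (h : ∀ p, f p = g p) : Dder U Y f x = Dder U Y g x := by
  rw [show f = g from funext h]

/-- Commutation of ∂θ with Dη. -/
lemma pθ_Dder (hU : ContDiff ℝ (⊤ : ℕ∞) U) (hY : ContDiff ℝ (⊤ : ℕ∞) Y) (hf : ContDiff ℝ (⊤ : ℕ∞) f)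
    (x : ℝ × ℝ × ℝ) :
    pθ (Dder U Y f) x
      = pθ U x * Dder U Y f x + Dder U Y (pθ f) x
        + Real.exp (U x) * pθ Y x * pθ f x := by
  have hUd := hU.differentiable (by simp)
  have hYd := hY.differentiable (by simp)
  have hpθf : Differentiable ℝ (fun p => fderiv ℝ f p (1, 0, 0)) :=
    (pd_smooth hf _).differentiable (by simp)
  have hpηf : Differentiable ℝ (fun p => fderiv ℝ f p (0, 1, 0)) :=
    (pd_smooth hf _).differentiable (by simp)
  have h1 : DifferentiableAt ℝ (fun p => Real.exp (U p)) x := (hUd x).exp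
  have h2 : DifferentiableAt ℝ
      (fun p => fderiv ℝ f p (0, 1, 0) + Y p * fderiv ℝ f p (1, 0, 0)) x :=
    (hpηf x).add ((hYd x).mul (hpθf x))
  unfold Dder pθ pη
  rw [pd_mul h1 h2, pd_exp (hUd x), pd_add (hpηf x) ((hYd x).fun_mul (hpθf x)),
      pd_mul (hYd x) (hpθf x), pd_comm hf x (1, 0, 0) (0, 1, 0)]
  ring

end Aux

/-- The combination D = A_θ − (U+V)_θ A − V_θ B + U_θ C vanishes identically. -/
theorem D_vanishes (U V M Y : ℝ × ℝ × ℝ → ℝ)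
    (hU : ContDiff ℝ (⊤ : ℕ∞) U) (hV : ContDiff ℝ (⊤ : ℕ∞) V) (hM : ContDiff ℝ (⊤ : ℕ∞) M)
    (hY : ContDiff ℝ (⊤ : ℕ∞) Y)
    (hYeq : ∀ x : ℝ × ℝ × ℝ,
      pθ (fun p => phiF U M Y p + psiF U V Y p) x
        = psiF U V Y x * pθ (fun p => U p + V p) x) :
    ∀ x : ℝ × ℝ × ℝ,
      pθ (fun p => Dder U Y (phiF U M Y) p + Dder U Y (psiF U V Y) p
            - (1/2) * (phiF U M Y p)^2 - phiF U M Y p * psiF U V Y p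
            - (psiF U V Y p)^2) x
        - pθ (fun p => U p + V p) x
            * (Dder U Y (phiF U M Y) x + Dder U Y (psiF U V Y) x
                - (1/2) * (phiF U M Y x)^2 - phiF U M Y x * psiF U V Y x
                - (psiF U V Y x)^2)
        - pθ V x * (-(Dder U Y (phiF U M Y) x) + (1/2) * (phiF U M Y x)^2)
        + pθ U x * (-(Dder U Y (psiF U V Y) x) - (1/2) * (phiF U M Y x)^2
                + (psiF U V Y x)^2) = 0 := by
  intro x
  -- smoothness
  have hw : ContDiff ℝ (⊤ : ℕ∞) (fun p => U p + V p) := hU.add hV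
  have hψ : ContDiff ℝ (⊤ : ℕ∞) (psiF U V Y) := Dder_smooth hU hY hw
  have hφ : ContDiff ℝ (⊤ : ℕ∞) (phiF U M Y) :=
    (Dder_smooth hU hY hM).sub (hU.exp.mul (pd_smooth hY _))
  have hDφ : ContDiff ℝ (⊤ : ℕ∞) (Dder U Y (phiF U M Y)) := Dder_smooth hU hY hφ
  have hDψ : ContDiff ℝ (⊤ : ℕ∞) (Dder U Y (psiF U V Y)) := Dder_smooth hU hY hψ
  have hφd := hφ.differentiable (by simp)
  have hψd := hψ.differentiable (by simp)
  have hpθφd := (pθ_smooth hφ).differentiable (by simp)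
  have hpθψd := (pθ_smooth hψ).differentiable (by simp)
  have hpθwd := (pθ_smooth hw).differentiable (by simp)
  -- expansion of the pθ of the big combination
  have d1 : DifferentiableAt ℝ
      (fun p => Dder U Y (phiF U M Y) p + Dder U Y (psiF U V Y) p) x :=
    ((hDφ.differentiable (by simp)) x).add ((hDψ.differentiable (by simp)) x)
  have d2 : DifferentiableAt ℝ (fun p => (1/2 : ℝ) * (phiF U M Y p)^2) x :=
    ((hφd x).pow 2).const_mul _
  have d3 : DifferentiableAt ℝ (fun p => phiF U M Y p * psiF U V Y p) x :=
    (hφd x).mul (hψd x)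
  have h1 : pθ (fun p => Dder U Y (phiF U M Y) p + Dder U Y (psiF U V Y) p
            - (1/2) * (phiF U M Y p)^2 - phiF U M Y p * psiF U V Y p
            - (psiF U V Y p)^2) x
      = pθ (Dder U Y (phiF U M Y)) x + pθ (Dder U Y (psiF U V Y)) x
        - (1/2) * (2 * phiF U M Y x * pθ (phiF U M Y) x)
        - (phiF U M Y x * pθ (psiF U V Y) x + psiF U V Y x * pθ (phiF U M Y) x)
        - 2 * psiF U V Y x * pθ (psiF U V Y) x := by
    rw [pθ_sub ((d1.fun_sub d2).fun_sub d3) ((hψd x).fun_pow 2),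
        pθ_sub (d1.fun_sub d2) d3, pθ_sub d1 d2,
        pθ_add ((hDφ.differentiable (by simp)) x) ((hDψ.differentiable (by simp)) x),
        pθ_const_mul ((hφd x).fun_pow 2), pθ_sq (hφd x), pθ_mul (hφd x) (hψd x),
        pθ_sq (hψd x)]
  -- commutation for φ and ψ
  have h2 := pθ_Dder hU hY hφ x
  have h3 := pθ_Dder hU hY hψ x
  -- combine the transported θ-derivatives using the constraint
  have e2 : ∀ p, pθ (phiF U M Y) p + pθ (psiF U V Y) p
      = psiF U V Y p * pθ (fun q => U q + V q) p := by
    intro p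
    rw [← pθ_add (hφd p) (hψd p)]
    exact hYeq p
  have h4 : Dder U Y (pθ (phiF U M Y)) x + Dder U Y (pθ (psiF U V Y)) x
      = psiF U V Y x * Dder U Y (pθ (fun q => U q + V q)) x
        + pθ (fun q => U q + V q) x * Dder U Y (psiF U V Y) x := by
    rw [← Dder_add (hpθφd x) (hpθψd x),
        Dder_congr (U := U) (Y := Y)
          (g := fun p => psiF U V Y p * pθ (fun q => U q + V q) p) e2,
        Dder_mul (hψd x) (hpθwd x)]
  -- commutation for w = U + V, using Dη(U+V) = ψ
  have h5 : pθ (psiF U V Y) x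
      = pθ U x * psiF U V Y x + Dder U Y (pθ (fun q => U q + V q)) x
        + Real.exp (U x) * pθ Y x * pθ (fun q => U q + V q) x :=
    pθ_Dder hU hY hw x
  have h6 : pθ (fun p => U p + V p) x = pθ U x + pθ V x :=
    pθ_add ((hU.differentiable (by simp)) x) ((hV.differentiable (by simp)) x)
  have h7 := e2 x
  rw [h6] at h4 h5 h7
  rw [h1, h2, h3, h6]
  linear_combination h4 - psiF U V Y x * h5
    + (Real.exp (U x) * pθ Y x - phiF U M Y x - psiF U V Y x) * h7
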